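/- Let Q be a weakly connected quiver having a loop, i.e., an arrow from some vertex to itself. Then the separated quiver ℤ_v Q is weakly connected (it has exactly one weakly connected component). -/

import Mathlib

/-!
A zigzag `a = q₀ — q₁ — ⋯ — qₖ = b` in `Q` lifts, from any level `n`, to a zigzag in `ℤ_v Q`
from `(a, n)` to `(b, m)` for some `m`: each arrow moves one level up and each reversed arrow
one level down. So every vertex of `ℤ_v Q` is joined to some `(v, m)`, and the loop at `v`
lifts to a bi-infinite chain `(v, n) ⟶ (v, n + 1)` joining all levels of `v` together.
-/

/-- The separated quiver `ℤ_v Q` of a quiver `Q`: the vertices are `Q × ℤ`, and for each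
arrow `α : i ⟶ j` of `Q` and each `n : ℤ` there is one arrow `(i, n) ⟶ (j, n + 1)`. -/
instance sepQuiver (Q : Type) [Quiver Q] : Quiver (Q × ℤ) :=
  ⟨fun p q => (p.1 ⟶ q.1) × PLift (q.2 = p.2 + 1)⟩

open Quiver

namespace Quiver.WeaklyConnectedComponent

theorem mk_eq_of_hom {V : Type*} [Quiver V] {a b : V} (f : a ⟶ b) :
    WeaklyConnectedComponent.mk a = WeaklyConnectedComponent.mk b :=
  (WeaklyConnectedComponent.eq a b).2 ⟨(show Symmetrify.of.obj a ⟶ b from Sum.inl f).toPath⟩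

end Quiver.WeaklyConnectedComponent

namespace sepQuiver

open WeaklyConnectedComponent

variable {Q : Type} [Quiver Q]

def liftHom {i j : Q} (f : i ⟶ j) {m n : ℤ} (h : n = m + 1) : ((i, m) : Q × ℤ) ⟶ (j, n) :=
  ⟨f, ⟨h⟩⟩

theorem exists_mk_eq_of_path {a b : Q} (p : @Path (Symmetrify Q) _ a b) (n : ℤ) :
    ∃ m : ℤ, WeaklyConnectedComponent.mk (a, n) = WeaklyConnectedComponent.mk (b, m) := by
  induction p with
  | nil => exact ⟨n, rfl⟩
  | cons _ f ih =>
    obtain ⟨m, hm⟩ := ih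
    rcases f with g | g
    · exact ⟨m + 1, hm.trans (mk_eq_of_hom (liftHom g rfl))⟩
    · exact ⟨m - 1, hm.trans (mk_eq_of_hom (liftHom g (sub_add_cancel m 1).symm)).symm⟩

theorem exists_mk_eq_of_mk_eq {a b : Q}
    (h : WeaklyConnectedComponent.mk a = WeaklyConnectedComponent.mk b) (n : ℤ) :
    ∃ m : ℤ, WeaklyConnectedComponent.mk (a, n) = WeaklyConnectedComponent.mk (b, m) := by
  obtain ⟨p⟩ := (WeaklyConnectedComponent.eq a b).1 h
  exact exists_mk_eq_of_path p n

theorem mk_eq_mk_zero_of_loop {v : Q} (e : v ⟶ v) (n : ℤ) :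
    WeaklyConnectedComponent.mk (v, n) = WeaklyConnectedComponent.mk ((v, 0) : Q × ℤ) := by
  induction n using Int.induction_on with
  | zero => rfl
  | succ k ih => exact (mk_eq_of_hom (liftHom e rfl)).symm.trans ih
  | pred k ih => exact (mk_eq_of_hom (liftHom e (sub_add_cancel _ 1).symm)).trans ih

end sepQuiver

theorem sep_connected_of_loop_general
    (Q : Type) [Quiver Q]
    [Subsingleton (Quiver.WeaklyConnectedComponent Q)]
    (v : Q) (e : v ⟶ v) :
    Nonempty (Quiver.WeaklyConnectedComponent (Q × ℤ)) ∧
      Subsingleton (Quiver.WeaklyConnectedComponent (Q × ℤ)) := by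
  have mk_eq_base (x : Q × ℤ) :
      WeaklyConnectedComponent.mk x = WeaklyConnectedComponent.mk ((v, 0) : Q × ℤ) := by
    have hQ : WeaklyConnectedComponent.mk x.1 = WeaklyConnectedComponent.mk v :=
      Subsingleton.elim _ _
    obtain ⟨m, hm⟩ := sepQuiver.exists_mk_eq_of_mk_eq hQ x.2
    exact hm.trans (sepQuiver.mk_eq_mk_zero_of_loop e m)
  refine ⟨⟨WeaklyConnectedComponent.mk (v, 0)⟩, ⟨fun x y => ?_⟩⟩
  induction x, y using Quotient.inductionOn₂' with
  | h a b => exact (mk_eq_base a).trans (mk_eq_base b).symm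

/-- If `Q` is a weakly connected quiver having a loop (an arrow from some vertex to
itself), then the separated quiver `ℤ_v Q` is weakly connected: it is nonempty and has
exactly one weakly connected component. -/
theorem sep_connected_of_loop
    (Q : Type) [Quiver Q] [Nonempty Q]
    [Subsingleton (Quiver.WeaklyConnectedComponent Q)]
    (v : Q) (e : v ⟶ v) :
    Nonempty (Quiver.WeaklyConnectedComponent (Q × ℤ)) ∧
      Subsingleton (Quiver.WeaklyConnectedComponent (Q × ℤ)) :=
  sep_connected_of_loop_general Q v e
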